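/- arXiv:2208.11001 — 8 statements merged into one kernel-verified Lean document; each statement's English description precedes it below -/
import Mathlib

section
/- For any graph G with adjacency dimension adim(G) and locating-dominating number LD(G), we have LD(G) - 1 ≤ adim(G) ≤ LD(G). -/
open SimpleGraph Finset

/-- `A` is an adjacency resolving set of `G`. -/
def IsAdjResolving {V : Type*} (G : SimpleGraph V) (A : Set V) : Prop :=
  ∀ x y : V, x ≠ y → ∃ z ∈ A, min (G.edist z x) 2 ≠ min (G.edist z y) 2

/-- The adjacency dimension of `G`. -/
noncomputable def adim {V : Type*} [Fintype V] [DecidableEq V] (G : SimpleGraph V) : ℕ :=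
  sInf {n | ∃ A : Finset V, IsAdjResolving G ↑A ∧ A.card = n}

/-- `C` is a locating-dominating set of `G`. -/
def IsLocDom {V : Type*} (G : SimpleGraph V) (C : Set V) : Prop :=
  (∀ v ∉ C, ((G.neighborSet v ∪ {v}) ∩ C).Nonempty) ∧
  ∀ u ∉ C, ∀ v ∉ C, u ≠ v →
    (G.neighborSet u ∪ {u}) ∩ C ≠ (G.neighborSet v ∪ {v}) ∩ C

/-- The locating-dominating number of `G`. -/
noncomputable def LD {V : Type*} [Fintype V] [DecidableEq V] (G : SimpleGraph V) : ℕ :=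
  sInf {n | ∃ C : Finset V, IsLocDom G ↑C ∧ C.card = n}

/-- `f` is a resolving broadcast of `G`. -/
def IsResolvingBroadcast {V : Type*} (G : SimpleGraph V) (f : V → ℕ) : Prop :=
  ∀ x y : V, x ≠ y → ∃ z, 0 < f z ∧
    min (G.edist z x) ((f z : ℕ∞) + 1) ≠ min (G.edist z y) ((f z : ℕ∞) + 1)

/-- The broadcast dimension of `G`. -/
noncomputable def bdim {V : Type*} [Fintype V] (G : SimpleGraph V) : ℕ :=
  sInf {n | ∃ f : V → ℕ, IsResolvingBroadcast G f ∧ ∑ v, f v = n}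

/-- There is a directed path of length `m` from `u` to `v` in the digraph `D`. -/
def DPath {V : Type*} (D : V → V → Prop) (u v : V) (m : ℕ) : Prop :=
  ∃ p : Fin (m + 1) → V, p 0 = u ∧ p (Fin.last m) = v ∧
    ∀ i : Fin m, D (p i.castSucc) (p i.succ)

/-- Directed distance in the digraph `D` (∞ if there is no directed path). -/
noncomputable def ddist {V : Type*} (D : V → V → Prop) (u v : V) : ℕ∞ :=
  sInf {n : ℕ∞ | ∃ m : ℕ, DPath D u v m ∧ n = m}

/-- `A` is an adjacency resolving set of the digraph `D`. -/
def IsDirAdjResolving {V : Type*} (D : V → V → Prop) (A : Set V) : Prop :=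
  ∀ x y : V, x ≠ y → ∃ z ∈ A, min (ddist D z x) 2 ≠ min (ddist D z y) 2

/-- The adjacency dimension of the digraph `D`. -/
noncomputable def dirAdim {V : Type*} [Fintype V] [DecidableEq V] (D : V → V → Prop) : ℕ :=
  sInf {n | ∃ A : Finset V, IsDirAdjResolving D ↑A ∧ A.card = n}

/-- `f` is a resolving broadcast of the digraph `D`. -/
def IsDirResolvingBroadcast {V : Type*} (D : V → V → Prop) (f : V → ℕ) : Prop :=
  ∀ x y : V, x ≠ y → ∃ z, 0 < f z ∧
    min (ddist D z x) ((f z : ℕ∞) + 1) ≠ min (ddist D z y) ((f z : ℕ∞) + 1)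

/-- The broadcast dimension of the digraph `D`. -/
noncomputable def dirBdim {V : Type*} [Fintype V] (D : V → V → Prop) : ℕ :=
  sInf {n | ∃ f : V → ℕ, IsDirResolvingBroadcast D f ∧ ∑ v, f v = n}

/-- `D` is an orientation of the simple graph `G`. -/
def IsOrientation {V : Type*} (G : SimpleGraph V) (D : V → V → Prop) : Prop :=
  (∀ u v, G.Adj u v ↔ (D u v ∨ D v u)) ∧ ∀ u v, ¬(D u v ∧ D v u)

section Helpers

variable {V : Type*} (G : SimpleGraph V)

lemma enat_one_or_two {a : ℕ∞} (h1 : 1 ≤ a) (h2 : a ≤ 2) : a = 1 ∨ a = 2 := by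
  lift a to ℕ using ne_top_of_le_ne_top (by decide) h2
  norm_cast at h1 h2 ⊢
  omega

lemma min_edist_cases {z u : V} (h : z ≠ u) :
    min (G.edist z u) 2 = 1 ∨ min (G.edist z u) 2 = 2 := by
  refine enat_one_or_two ?_ (min_le_right _ _)
  exact le_min (Order.one_le_iff_pos.mpr (G.edist_pos_of_ne h)) one_le_two

lemma min_edist_eq_one_iff {z u : V} (h : z ≠ u) :
    min (G.edist z u) 2 = 1 ↔ G.Adj z u := by
  constructor
  · intro hm
    rcases min_cases (G.edist z u) 2 with ⟨he, _⟩ | ⟨he, _⟩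
    · exact edist_eq_one_iff_adj.mp (he ▸ hm)
    · rw [he] at hm; exact absurd hm (by decide)
  · intro ha
    rw [edist_eq_one_iff_adj.mpr ha]
    decide

lemma mem_I_iff {z u : V} (C : Set V) (hz : z ∈ C) (hu : u ∉ C) :
    z ∈ (G.neighborSet u ∪ {u}) ∩ C ↔ min (G.edist z u) 2 = 1 := by
  have hne : z ≠ u := fun h => hu (h ▸ hz)
  rw [min_edist_eq_one_iff G hne]
  simp only [Set.mem_inter_iff, Set.mem_union, Set.mem_singleton_iff, mem_neighborSet]
  constructor
  · rintro ⟨h | h, _⟩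
    · exact h.symm
    · exact absurd h hne
  · intro h
    exact ⟨Or.inl h.symm, hz⟩

lemma I_ne_of_min_ne {C : Set V} {u v z : V} (hu : u ∉ C) (hv : v ∉ C) (hzC : z ∈ C)
    (h : min (G.edist z u) 2 ≠ min (G.edist z v) 2) :
    (G.neighborSet u ∪ {u}) ∩ C ≠ (G.neighborSet v ∪ {v}) ∩ C := by
  intro heq
  have hiff : min (G.edist z u) 2 = 1 ↔ min (G.edist z v) 2 = 1 := by
    rw [← mem_I_iff G C hzC hu, ← mem_I_iff G C hzC hv, heq]
  have hzu : z ≠ u := fun e => hu (e ▸ hzC)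
  have hzv : z ≠ v := fun e => hv (e ▸ hzC)
  rcases min_edist_cases G hzu with h1 | h1 <;>
    rcases min_edist_cases G hzv with h2 | h2 <;>
    simp_all

lemma resolve_of_I_ne {C : Set V} {u v : V} (hu : u ∉ C) (hv : v ∉ C)
    (hne : (G.neighborSet u ∪ {u}) ∩ C ≠ (G.neighborSet v ∪ {v}) ∩ C) :
    ∃ z ∈ C, min (G.edist z u) 2 ≠ min (G.edist z v) 2 := by
  obtain ⟨z, hz⟩ : ∃ z, ¬(z ∈ (G.neighborSet u ∪ {u}) ∩ C ↔ z ∈ (G.neighborSet v ∪ {v}) ∩ C) := by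
    by_contra h; push_neg at h; exact hne (Set.ext fun z => h z)
  by_cases hzu : z ∈ (G.neighborSet u ∪ {u}) ∩ C
  · have hzC : z ∈ C := hzu.2
    have hzv : z ∉ (G.neighborSet v ∪ {v}) ∩ C := fun h => hz ⟨fun _ => h, fun _ => hzu⟩
    refine ⟨z, hzC, ?_⟩
    rw [(mem_I_iff G C hzC hu).mp hzu]
    intro h
    exact hzv ((mem_I_iff G C hzC hv).mpr h.symm)
  · have hzv : z ∈ (G.neighborSet v ∪ {v}) ∩ C := by
      by_contra h; exact hz ⟨fun a => absurd a hzu, fun a => absurd a h⟩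
    have hzC : z ∈ C := hzv.2
    refine ⟨z, hzC, ?_⟩
    rw [(mem_I_iff G C hzC hv).mp hzv]
    intro h
    exact hzu ((mem_I_iff G C hzC hu).mpr h)

end Helpers


/-- For any graph `G`, `LD(G) - 1 ≤ adim(G) ≤ LD(G)`. -/
theorem stmt_0 {V : Type*} [Fintype V] [DecidableEq V] (G : SimpleGraph V) :
    LD G - 1 ≤ adim G ∧ adim G ≤ LD G := by
  have hAne : {n | ∃ A : Finset V, IsAdjResolving G ↑A ∧ A.card = n}.Nonempty := by
    refine ⟨_, Finset.univ, fun x y hxy => ⟨x, by simp, ?_⟩, rfl⟩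
    rw [edist_self, min_eq_left (by decide : (0:ℕ∞) ≤ 2)]
    exact (lt_min (G.edist_pos_of_ne hxy) (by decide)).ne
  have hCne : {n | ∃ C : Finset V, IsLocDom G ↑C ∧ C.card = n}.Nonempty := by
    refine ⟨_, Finset.univ, ⟨?_, ?_⟩, rfl⟩
    · intro v hv; simp at hv
    · intro u hu; simp at hu
  obtain ⟨C, hC, hCcard⟩ := Nat.sInf_mem hCne
  obtain ⟨A, hA, hAcard⟩ := Nat.sInf_mem hAne
  have h2 : adim G ≤ LD G := by
    refine Nat.sInf_le ⟨C, ?_, hCcard⟩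
    intro x y hxy
    by_cases hx : x ∈ (↑C : Set V)
    · refine ⟨x, hx, ?_⟩
      rw [edist_self, min_eq_left (by decide : (0:ℕ∞) ≤ 2)]
      exact (lt_min (G.edist_pos_of_ne hxy) (by decide)).ne
    by_cases hy : y ∈ (↑C : Set V)
    · refine ⟨y, hy, ?_⟩
      rw [edist_self, min_eq_left (by decide : (0:ℕ∞) ≤ 2)]
      exact ((lt_min (G.edist_pos_of_ne (Ne.symm hxy)) (by decide)).ne).symm
    · exact resolve_of_I_ne G hx hy (hC.2 x hx y hy hxy)
  refine ⟨?_, h2⟩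
  rw [tsub_le_iff_right]
  by_cases hdom : ∀ v ∉ (↑A : Set V), ((G.neighborSet v ∪ {v}) ∩ ↑A).Nonempty
  · have hLD : LD G ≤ adim G := by
      refine Nat.sInf_le ⟨A, ⟨hdom, ?_⟩, hAcard⟩
      intro u hu v hv huv
      obtain ⟨z, hz, hne⟩ := hA u v huv
      exact I_ne_of_min_ne G hu hv hz hne
    omega
  · push_neg at hdom
    obtain ⟨v₀, hv₀A, hv₀⟩ := hdom
    have hv₀A' : v₀ ∉ A := by simpa using hv₀A
    have hcoe : ((↑(insert v₀ A) : Set V)) = insert v₀ (↑A : Set V) := by simp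
    have hLocDom : IsLocDom G ↑(insert v₀ A) := by
      constructor
      · intro v hv
        rw [hcoe, Set.mem_insert_iff] at hv
        push_neg at hv
        obtain ⟨hvv₀, hvA⟩ := hv
        obtain ⟨z, hzA, hne⟩ := hA v v₀ hvv₀
        have hzv₀ : z ≠ v₀ := fun e => hv₀A (e ▸ hzA)
        have h2' : min (G.edist z v₀) 2 = 2 := by
          rcases min_edist_cases G hzv₀ with h | h
          · exfalso
            have := (mem_I_iff G (↑A) hzA hv₀A).mpr h
            rw [hv₀] at this
            exact this
          · exact h
        have h1' : min (G.edist z v) 2 = 1 := by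
          have hzv : z ≠ v := fun e => hvA (e ▸ hzA)
          rcases min_edist_cases G hzv with h | h
          · exact h
          · exact absurd (h.trans h2'.symm) hne
        refine ⟨z, ?_⟩
        have hzC : z ∈ (↑(insert v₀ A) : Set V) := by simp [hzA]
        have hvC : v ∉ (↑(insert v₀ A) : Set V) := by
          rw [hcoe]; simp [hvv₀, hvA]
        exact (mem_I_iff G _ hzC hvC).mpr h1'
      · intro u hu v hv huv
        have huA : u ∉ (↑A : Set V) := fun h => hu (by rw [hcoe]; exact Or.inr h)
        have hvA : v ∉ (↑A : Set V) := fun h => hv (by rw [hcoe]; exact Or.inr h)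
        obtain ⟨z, hzA, hne⟩ := hA u v huv
        have hzC : z ∈ (↑(insert v₀ A) : Set V) := by
          rw [hcoe]; exact Or.inr hzA
        exact I_ne_of_min_ne G hu hv hzC hne
    have hLD : LD G ≤ (insert v₀ A).card := Nat.sInf_le ⟨insert v₀ A, hLocDom, rfl⟩
    rw [Finset.card_insert_of_notMem hv₀A', hAcard] at hLD
    exact hLD
end

section
/- If G is a graph with maximum degree Δ and A is an adjacency resolving set of G, then |A| ≥ 2(|V(G)| - 1)/(Δ + 3). -/
open SimpleGraph Finset

-- helper: min with 2 characterization
lemma min_edist_two {V : Type*} (G : SimpleGraph V) [DecidableRel G.Adj] {z v : V} (h : z ≠ v) :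
    min (G.edist z v) 2 = if G.Adj z v then 1 else 2 := by
  by_cases had : G.Adj z v
  · rw [if_pos had, min_eq_left]
    · exact edist_eq_one_iff_adj.mpr had
    · rw [edist_eq_one_iff_adj.mpr had]; norm_num
  · rw [if_neg had, min_eq_right]
    have h0 : G.edist z v ≠ 0 := fun hc => h (edist_eq_zero_iff.mp hc)
    have h1 : G.edist z v ≠ 1 := fun hc => had (edist_eq_one_iff_adj.mp hc)
    have : 1 < G.edist z v := lt_of_le_of_ne (ENat.one_le_iff_ne_zero.mpr h0) (Ne.symm h1)
    have := Order.add_one_le_of_lt this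
    simpa [one_add_one_eq_two] using this

/-- If `A` is an adjacency resolving set of `G` with maximum degree `Δ`, then
`|A| ≥ 2(|V(G)| - 1)/(Δ + 3)` (stated multiplied out over ℕ). -/
theorem stmt_2 {V : Type*} [Fintype V] [DecidableEq V] (G : SimpleGraph V)
    [DecidableRel G.Adj] (A : Finset V) (hA : IsAdjResolving G ↑A) :
    2 * (Fintype.card V - 1) ≤ A.card * (G.maxDegree + 3) := by
  classical
  set n := Fintype.card V with hn
  set k := A.card with hk
  set Δ := G.maxDegree with hΔ
  set code : V → Finset V := fun v => A.filter (fun z => G.Adj z v) with hcode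
  set B : Finset V := Finset.univ \ A with hB
  -- injectivity of code on B
  have hinj : ∀ u ∈ B, ∀ v ∈ B, u ≠ v → code u ≠ code v := by
    intro u hu v hv huv hceq
    obtain ⟨z, hzA0, hne⟩ := hA u v huv
    have hzA : z ∈ A := hzA0
    have hzu : z ≠ u := by rintro rfl; simp [hB] at hu; exact hu hzA
    have hzv : z ≠ v := by rintro rfl; simp [hB] at hv; exact hv hzA
    rw [min_edist_two G hzu, min_edist_two G hzv] at hne
    have : G.Adj z u ↔ G.Adj z v := by
      constructor <;> intro h
      · by_contra h'
        have : z ∈ code u := by simp [hcode, hzA, h]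
        rw [hceq] at this; simp [hcode, h'] at this
      · by_contra h'
        have : z ∈ code v := by simp [hcode, hzA, h]
        rw [← hceq] at this; simp [hcode, h'] at this
    by_cases h : G.Adj z u
    · rw [if_pos h, if_pos (this.mp h)] at hne; exact hne rfl
    · rw [if_neg h, if_neg (fun h' => h (this.mpr h'))] at hne; exact hne rfl
  -- total sum of code cards
  have hsum : ∑ v ∈ B, (code v).card ≤ k * Δ := by
    calc ∑ v ∈ B, (code v).card ≤ ∑ v : V, (code v).card :=
          Finset.sum_le_sum_of_subset (Finset.sdiff_subset)
      _ = ∑ v : V, ∑ z ∈ A, (if G.Adj z v then 1 else 0) := by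
          refine Finset.sum_congr rfl fun v _ => ?_
          exact Finset.card_filter _ _
      _ = ∑ z ∈ A, ∑ v : V, (if G.Adj z v then 1 else 0) := Finset.sum_comm
      _ = ∑ z ∈ A, G.degree z := by
          refine Finset.sum_congr rfl fun z _ => ?_
          rw [← Finset.card_filter, SimpleGraph.degree]
          congr 1
          ext v
          simp [SimpleGraph.mem_neighborFinset]
      _ ≤ ∑ z ∈ A, Δ := Finset.sum_le_sum fun z _ => G.degree_le_maxDegree z
      _ = k * Δ := by rw [Finset.sum_const, smul_eq_mul]
  -- at most one empty code in B
  have h0 : (B.filter (fun v => code v = ∅)).card ≤ 1 := by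
    rw [Finset.card_le_one]
    intro a ha b hb
    simp only [Finset.mem_filter] at ha hb
    by_contra hne
    exact hinj a ha.1 b hb.1 hne (ha.2.trans hb.2.symm)
  -- at most k singleton codes
  have h1 : (B.filter (fun v => (code v).card = 1)).card ≤ k := by
    set B1 := B.filter (fun v => (code v).card = 1) with hB1
    have himg : B1.card = (B1.image code).card := by
      rw [Finset.card_image_of_injOn]
      intro a ha b hb hab
      by_contra hne
      exact hinj a (Finset.mem_filter.mp ha).1 b (Finset.mem_filter.mp hb).1 hne hab
    rw [himg]
    have hsub : B1.image code ⊆ A.image (fun z => {z}) := by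
      intro c hc
      obtain ⟨v, hv, rfl⟩ := Finset.mem_image.mp hc
      have hcard := (Finset.mem_filter.mp hv).2
      obtain ⟨z, hz⟩ := Finset.card_eq_one.mp hcard
      rw [hz]
      refine Finset.mem_image.mpr ⟨z, ?_, rfl⟩
      have : z ∈ code v := hz ▸ Finset.mem_singleton_self z
      exact (Finset.mem_filter.mp this).1
    calc (B1.image code).card ≤ (A.image (fun z => {z})).card := Finset.card_le_card hsub
      _ ≤ k := Finset.card_image_le
  -- key pointwise bound: 2 ≤ 2*[code=∅] + [card=1] + card
  have hkey : 2 * B.card ≤ 2 * (B.filter (fun v => code v = ∅)).card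
      + (B.filter (fun v => (code v).card = 1)).card + ∑ v ∈ B, (code v).card := by
    have : 2 * B.card = ∑ v ∈ B, 2 := by rw [Finset.sum_const, smul_eq_mul, mul_comm]
    rw [this, Finset.card_filter, Finset.card_filter, Finset.mul_sum,
      ← Finset.sum_add_distrib, ← Finset.sum_add_distrib]
    refine Finset.sum_le_sum fun v _ => ?_
    by_cases he : code v = ∅
    · simp [he]
    · by_cases h1 : (code v).card = 1
      · simp [h1, he]
      · have : 2 ≤ (code v).card := by
          have := Finset.card_pos.mpr (Finset.nonempty_of_ne_empty he)
          omega
        simp [he, h1]; omega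
  have hBcard : B.card = n - k := by
    rw [hB, Finset.card_sdiff_of_subset (Finset.subset_univ A), Finset.card_univ]
  have hkn : k ≤ n := hk ▸ hn ▸ (Finset.card_le_univ A).trans_eq Finset.card_univ
  have hexp : k * (Δ + 3) = k * Δ + 3 * k := by ring
  omega
end

section
/- For every n ≥ 2, the locating-dominating number of P_2 □ P_n is at least ⌈(3n-1)/4⌉. -/
open SimpleGraph Finset

def phiN : ℕ := 6541034848979385660440071536213307615949708181017058939852623248577112473317348446057014440081946875799812204183415187974153001066107933176585526207848193971381934788014269263539108554785585769341843124951972019518052179542341215485390800147031640382635682088199805554401787004789014005522892932101030745455703291478143659511931968358786084948290963259098469198691417977799397191920879651068238677719059203108084126424535786588497745903763452460966864241315299660850274724875401130022910796923716576408985450963924947501758232391481803712700297383336627995700668214392418797038066338230540826700489279545214815333023127041589751261326700636650928075867899975444219103724300282852548937390046631630554671738617839220522244823975283170011673770170993662686805364218739387642820026421486985096041923941867599315800144259383088473000075137870205156960447703469740704584660419243038893565334421401867657915792797127677061951665861640239303360511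

def bitc (c r : ℕ) : Bool := c != 4 && (c / 2^r) % 2 == 1
def phiF (s : ℕ) : ℕ := phiN / 32^s % 32
def Dck (c d e : ℕ) : Bool :=
  (d == 4) || ((bitc d 0 || bitc d 1 || bitc c 0 || bitc e 0) &&
               (bitc d 0 || bitc d 1 || bitc c 1 || bitc e 1))
def Ack (b c d e : ℕ) : Bool :=
  (c == 4) || ((bitc c 0 || bitc d 1 || bitc b 0 || bitc e 1) &&
               (bitc c 1 || bitc d 0 || bitc b 1 || bitc e 0))
def Bck (a b c d e : ℕ) : Bool :=
  (b == 4) || bitc b 0 || bitc b 1 || bitc d 0 || bitc d 1 ||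
    ((bitc a 0 || bitc e 0) && (bitc a 1 || bitc e 1))
def transOk (s e : ℕ) : Bool :=
  Dck (s/25%5) (s/125%5) e && Ack (s/5%5) (s/25%5) (s/125%5) e &&
    Bck (s%5) (s/5%5) (s/25%5) (s/125%5) e
def wN (e : ℕ) : ℕ := e % 2 + e / 2 % 2
def nxtS (s e : ℕ) : ℕ := s / 5 + 125 * e

set_option exponentiation.threshold 100000 in
set_option maxRecDepth 100000 in
lemma cert_start : phiF 624 = 3 := by decide

set_option maxRecDepth 100000 in
lemma cert_trans : ∀ s < 625, ∀ e < 4, phiF s < 31 → transOk s e = true →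
    phiF (nxtS s e) < 31 ∧ phiF (nxtS s e) + 3 ≤ phiF s + 4 * wN e := by decide

set_option maxRecDepth 100000 in
lemma cert_final : ∀ s < 625, phiF s < 31 → transOk s 0 = true → 3 ≤ phiF s := by decide

def cellf (p q : ℕ → Bool) (j : ℕ) : ℕ := (cond (p j) 1 0) + 2 * (cond (q j) 1 0)
def cif (p q : ℕ → Bool) (i : ℕ) : ℕ := if i < 4 then 4 else cellf p q (i - 4)
def stf (p q : ℕ → Bool) (j : ℕ) : ℕ :=
  cif p q j + 5 * cif p q (j+1) + 25 * cif p q (j+2) + 125 * cif p q (j+3)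


open Finset in
lemma core (n : ℕ) (p q : ℕ → Bool)
    (hT : ∀ j < n, transOk (stf p q j) (cellf p q j) = true)
    (hF : transOk (stf p q n) 0 = true) :
    3 * n ≤ 4 * ∑ i ∈ Finset.range n, wN (cellf p q i) := by
  have hcell : ∀ j, cellf p q j < 4 := by
    intro j; unfold cellf; cases p j <;> cases q j <;> simp
  have hci : ∀ i, cif p q i < 5 := by
    intro i; unfold cif; split
    · omega
    · exact Nat.lt_of_lt_of_le (hcell _) (by omega)
  have hstlt : ∀ j, stf p q j < 625 := by
    intro j; unfold stf
    have := hci j; have := hci (j+1); have := hci (j+2); have := hci (j+3); omega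
  have hnxt : ∀ j, nxtS (stf p q j) (cellf p q j) = stf p q (j+1) := by
    intro j
    have h0 := hci j; have h1 := hci (j+1); have h2 := hci (j+2); have h3 := hci (j+3)
    have hc4 : cif p q (j+4) = cellf p q j := by
      unfold cif; rw [if_neg (by omega)]; congr 1
    unfold nxtS stf
    simp only [show j+1+1 = j+2 from rfl, show j+1+2 = j+3 from rfl,
      show j+1+3 = j+4 from rfl]
    rw [hc4]; omega
  have main : ∀ j ≤ n, phiF (stf p q j) < 31 ∧
      phiF (stf p q j) + 3 * j ≤ 3 + 4 * ∑ i ∈ Finset.range j, wN (cellf p q i) := by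
    intro j
    induction j with
    | zero =>
      intro _
      have h0 : stf p q 0 = 624 := by norm_num [stf, cif]
      have h1 : phiF (stf p q 0) = 3 := by rw [h0]; exact cert_start
      rw [h1]; simp
    | succ j ih =>
      intro hjn
      have hj : j < n := by omega
      obtain ⟨ih1, ih2⟩ := ih (by omega)
      obtain ⟨h1, h2⟩ := cert_trans (stf p q j) (hstlt j) (cellf p q j) (hcell j) ih1 (hT j hj)
      rw [hnxt j] at h1 h2
      refine ⟨h1, ?_⟩
      rw [Finset.sum_range_succ]
      omega
  obtain ⟨h1, h2⟩ := main n le_rfl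
  have := cert_final (stf p q n) (hstlt n) h1 hF
  omega


open SimpleGraph Finset

section Graph

variable {n : ℕ} (C : Finset (Fin 2 × Fin n))

def xC (r : Fin 2) (j : ℕ) : Bool := if h : j < n then decide ((r, ⟨j, h⟩) ∈ C) else false

lemma grid_constraints
    (hld : IsLocDom ((SimpleGraph.pathGraph 2).boxProd (SimpleGraph.pathGraph n)) ↑C) :
    (∀ (r : Fin 2) (j : ℕ), j < n → xC C r j = false →
      (xC C (r+1) j = true ∨ xC C r (j+1) = true ∨ ∃ i, i + 1 = j ∧ xC C r i = true)) ∧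
    (∀ (r : Fin 2) (j : ℕ), j + 1 < n → xC C r j = false → xC C (r+1) (j+1) = false →
      (xC C (r+1) (j+2) = true ∨ ∃ i, i + 1 = j ∧ xC C r i = true)) ∧
    (∀ (r : Fin 2) (j : ℕ), j + 2 < n → xC C r j = false → xC C r (j+2) = false →
      xC C (r+1) j = false → xC C (r+1) (j+2) = false →
      (xC C r (j+3) = true ∨ ∃ i, i + 1 = j ∧ xC C r i = true)) := by
  set G := (SimpleGraph.pathGraph 2).boxProd (SimpleGraph.pathGraph n) with hG
  set x := xC C with hx
  have mem_x' : ∀ (r : Fin 2) (j : ℕ) (h : j < n),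
      (x r j = true ↔ (r, (⟨j, h⟩ : Fin n)) ∈ C) := by
    intro r j h; simp only [hx, xC]; rw [dif_pos h]; simp
  have mem_xb : ∀ (r : Fin 2) (b : Fin n), (x r b.val = true ↔ (r, b) ∈ C) := by
    intro r b; rw [mem_x' r b.val b.isLt]
  have fin2 : ∀ a b : Fin 2, a ≠ b → b = a + 1 := by decide
  have fin2' : ∀ a : Fin 2, a ≠ a + 1 := by decide
  have adjc : ∀ (r s : Fin 2) (a b : Fin n), (G.Adj (r, a) (s, b) ↔
      ((r ≠ s ∧ a = b) ∨ ((a.val + 1 = b.val ∨ b.val + 1 = a.val) ∧ r = s))) := by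
    intro r s a b
    rw [hG, SimpleGraph.boxProd_adj]
    show ((SimpleGraph.pathGraph 2).Adj r s ∧ a = b ∨ (SimpleGraph.pathGraph n).Adj a b ∧ r = s) ↔ _
    constructor
    · rintro (⟨h1, h2⟩ | ⟨h1, h2⟩)
      · refine Or.inl ⟨?_, h2⟩
        rw [SimpleGraph.pathGraph_adj] at h1
        rw [ne_eq, Fin.ext_iff]; omega
      · exact Or.inr ⟨by rwa [SimpleGraph.pathGraph_adj] at h1, h2⟩
    · rintro (⟨h1, h2⟩ | ⟨h1, h2⟩)
      · refine Or.inl ⟨?_, h2⟩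
        rw [SimpleGraph.pathGraph_adj]
        rw [ne_eq, Fin.ext_iff] at h1
        have := r.isLt; have := s.isLt; omega
      · exact Or.inr ⟨by rwa [SimpleGraph.pathGraph_adj], h2⟩
  have code_mem : ∀ (u z : Fin 2 × Fin n),
      (z ∈ (G.neighborSet u ∪ {u}) ∩ ↑C ↔ ((G.Adj u z ∨ z = u) ∧ z ∈ C)) := by
    intro u z
    constructor
    · rintro ⟨h1 | h1, h2⟩
      · exact ⟨Or.inl ((SimpleGraph.mem_neighborSet G u z).1 h1), Finset.mem_coe.1 h2⟩
      · exact ⟨Or.inr h1, Finset.mem_coe.1 h2⟩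
    · rintro ⟨h1 | h1, h2⟩
      · exact ⟨Or.inl ((SimpleGraph.mem_neighborSet G u z).2 h1), Finset.mem_coe.2 h2⟩
      · exact ⟨Or.inr h1, Finset.mem_coe.2 h2⟩
  have notmem : ∀ (r : Fin 2) (j : ℕ) (h : j < n), x r j = false →
      ((r, (⟨j, h⟩ : Fin n)) : Fin 2 × Fin n) ∉ (↑C : Set (Fin 2 × Fin n)) := by
    intro r j h hf hmem
    rw [Finset.mem_coe, ← mem_x' r j h, hf] at hmem
    exact Bool.false_ne_true hmem
  refine ⟨?_, ?_, ?_⟩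
  -- Domination
  · intro r j hj hxr
    obtain ⟨z, hz⟩ := hld.1 _ (notmem r j hj hxr)
    rw [code_mem] at hz
    obtain ⟨zr, zc⟩ := z
    obtain ⟨hadj | heq, hzC⟩ := hz
    · rw [adjc] at hadj
      obtain ⟨hr, hc⟩ | ⟨hc, hr⟩ := hadj
      · left
        have hceq : (⟨j, hj⟩ : Fin n) = zc := hc; subst hceq
        have hreq := fin2 _ _ hr; subst hreq
        exact (mem_x' (r+1) j hj).2 hzC
      · have hreq : r = zr := hr; subst hreq
        rcases hc with hc | hc
        · right; left
          have hc' : j + 1 = zc.val := hc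
          rw [hc']; exact (mem_xb r zc).2 hzC
        · right; right
          exact ⟨zc.val, hc, (mem_xb r zc).2 hzC⟩
    · exfalso
      injection heq with heq1 heq2; rw [heq1, heq2] at hzC
      rw [← mem_x' r j hj, hxr] at hzC
      exact Bool.false_ne_true hzC
  -- Pair A : u = (r,j), v = (r+1, j+1)
  · intro r j hj hu1 hv1
    by_contra hcon
    push_neg at hcon
    simp only [Bool.not_eq_true] at hcon
    obtain ⟨hc1, hprev⟩ := hcon
    have hjn : j < n := by omega
    have hun := notmem r j hjn hu1
    have hvn := notmem (r+1) (j+1) hj hv1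
    have huv : ((r, (⟨j, hjn⟩ : Fin n)) : Fin 2 × Fin n) ≠ (r+1, ⟨j+1, hj⟩) := by
      intro h; rw [Prod.ext_iff] at h; exact fin2' r h.1
    apply hld.2 _ hun _ hvn huv
    ext z
    rw [code_mem, code_mem]
    obtain ⟨zr, zc⟩ := z
    constructor
    · rintro ⟨hadj | heq, hzC⟩
      · refine ⟨?_, hzC⟩
        rw [adjc] at hadj
        obtain ⟨hr, hc⟩ | ⟨hc, hr⟩ := hadj
        · -- z = (r+1, j) : adjacent to v = (r+1,j+1) horizontally
          have hceq : (⟨j, hjn⟩ : Fin n) = zc := hc; subst hceq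
          have hreq := fin2 _ _ hr; subst hreq
          left; rw [adjc]; right
          exact ⟨Or.inr rfl, rfl⟩
        · have hreq : r = zr := hr; subst hreq
          rcases hc with hc | hc
          · -- zc = j+1 : z = (r, j+1), adjacent to v vertically
            have hc' : j + 1 = zc.val := hc
            left; rw [adjc]; left
            refine ⟨Ne.symm (fin2' r), ?_⟩
            exact Fin.ext hc'
          · -- zc = j - 1 : contradiction with hprev
            exfalso
            have hc' : zc.val + 1 = j := hc
            have := (mem_xb r zc).2 hzC
            rw [hprev zc.val hc'] at this
            exact Bool.false_ne_true this
      · exfalso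
        injection heq with heq1 heq2; rw [heq1, heq2] at hzC
        exact hun (Finset.mem_coe.2 hzC)
    · rintro ⟨hadj | heq, hzC⟩
      · refine ⟨?_, hzC⟩
        rw [adjc] at hadj
        obtain ⟨hr, hc⟩ | ⟨hc, hr⟩ := hadj
        · -- z = (r, j+1) : adjacent to u = (r,j) horizontally
          have hceq : (⟨j+1, hj⟩ : Fin n) = zc := hc; subst hceq
          have hzr : r = zr := by
            have h1 : zr = (r + 1) + 1 := fin2 _ _ hr
            rw [h1]; fin_cases r <;> rfl
          subst hzr
          left; rw [adjc]; right
          exact ⟨Or.inl rfl, rfl⟩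
        · have hreq : r + 1 = zr := hr; subst hreq
          rcases hc with hc | hc
          · -- zc = j+2 : contradiction with hc1
            exfalso
            have hc' : j + 2 = zc.val := hc
            have := (mem_xb (r+1) zc).2 hzC
            rw [← hc', hc1] at this
            exact Bool.false_ne_true this
          · -- zc = j : z = (r+1, j), adjacent to u vertically
            have hc' : zc.val + 1 = j + 1 := hc
            left; rw [adjc]; left
            refine ⟨fin2' r, ?_⟩
            apply Fin.ext; show j = zc.val; omega
      · exfalso
        injection heq with heq1 heq2; rw [heq1, heq2] at hzC
        exact hvn (Finset.mem_coe.2 hzC)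
  -- Pair B : u = (r,j), v = (r, j+2)
  · intro r j hj hu1 hu2 hu3 hu4
    by_contra hcon
    push_neg at hcon
    simp only [Bool.not_eq_true] at hcon
    obtain ⟨hc1, hprev⟩ := hcon
    have hjn : j < n := by omega
    have hun := notmem r j hjn hu1
    have hvn := notmem r (j+2) hj hu2
    have huv : ((r, (⟨j, hjn⟩ : Fin n)) : Fin 2 × Fin n) ≠ (r, ⟨j+2, hj⟩) := by
      intro h; rw [Prod.ext_iff] at h
      have := congrArg Fin.val h.2
      simp at this
    apply hld.2 _ hun _ hvn huv
    ext z
    rw [code_mem, code_mem]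
    obtain ⟨zr, zc⟩ := z
    constructor
    · rintro ⟨hadj | heq, hzC⟩
      · refine ⟨?_, hzC⟩
        rw [adjc] at hadj
        obtain ⟨hr, hc⟩ | ⟨hc, hr⟩ := hadj
        · -- z = (r+1, j) : contradiction with hu3
          exfalso
          have hceq : (⟨j, hjn⟩ : Fin n) = zc := hc; subst hceq
          have hreq := fin2 _ _ hr; subst hreq
          have := (mem_x' (r+1) j hjn).2 hzC
          rw [hu3] at this
          exact Bool.false_ne_true this
        · have hreq : r = zr := hr; subst hreq
          rcases hc with hc | hc
          · -- zc = j+1 : adjacent to v = (r, j+2) horizontally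
            have hc' : j + 1 = zc.val := hc
            left; rw [adjc]; right
            exact ⟨Or.inr (show zc.val + 1 = j + 2 by omega), rfl⟩
          · -- zc = j-1 : contradiction with hprev
            exfalso
            have hc' : zc.val + 1 = j := hc
            have := (mem_xb r zc).2 hzC
            rw [hprev zc.val hc'] at this
            exact Bool.false_ne_true this
      · exfalso
        injection heq with heq1 heq2; rw [heq1, heq2] at hzC
        exact hun (Finset.mem_coe.2 hzC)
    · rintro ⟨hadj | heq, hzC⟩
      · refine ⟨?_, hzC⟩
        rw [adjc] at hadj
        obtain ⟨hr, hc⟩ | ⟨hc, hr⟩ := hadj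
        · -- z = (r+1, j+2) : contradiction with hu4
          exfalso
          have hceq : (⟨j+2, hj⟩ : Fin n) = zc := hc; subst hceq
          have hreq := fin2 _ _ hr; subst hreq
          have := (mem_x' (r+1) (j+2) hj).2 hzC
          rw [hu4] at this
          exact Bool.false_ne_true this
        · have hreq : r = zr := hr; subst hreq
          rcases hc with hc | hc
          · -- zc = j+3 : contradiction with hc1
            exfalso
            have hc' : j + 3 = zc.val := hc
            have := (mem_xb r zc).2 hzC
            rw [← hc', hc1] at this
            exact Bool.false_ne_true this
          · -- zc = j+1 : adjacent to u = (r,j) horizontally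
            have hc' : zc.val + 1 = j + 2 := hc
            left; rw [adjc]; right
            exact ⟨Or.inl (show j + 1 = zc.val by omega), rfl⟩
      · exfalso
        injection heq with heq1 heq2; rw [heq1, heq2] at hzC
        exact hvn (Finset.mem_coe.2 hzC)

end Graph


section Bridge

variable {n : ℕ} (C : Finset (Fin 2 × Fin n))

set_option maxHeartbeats 2000000 in
lemma grid_main (hld : IsLocDom ((SimpleGraph.pathGraph 2).boxProd (SimpleGraph.pathGraph n)) ↑C) :
    3 * n ≤ 4 * C.card := by
  obtain ⟨hGD, hGA, hGB⟩ := grid_constraints C hld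
  set p : ℕ → Bool := xC C 0 with hp
  set q : ℕ → Bool := xC C 1 with hq
  have hxF : ∀ (r : Fin 2) (j : ℕ), n ≤ j → xC C r j = false := by
    intro r j h; simp only [xC]; rw [dif_neg (by omega)]
  -- bitc bridges
  have hb0 : ∀ j, bitc (cellf p q j) 0 = p j := by
    intro j; cases hpj : p j <;> cases hqj : q j <;> simp [cellf, bitc, hpj, hqj]
  have hb1 : ∀ j, bitc (cellf p q j) 1 = q j := by
    intro j; cases hpj : p j <;> cases hqj : q j <;> simp [cellf, bitc, hpj, hqj]
  have hcif : ∀ j, cif p q (j+4) = cellf p q j := by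
    intro j; simp only [cif]; rw [if_neg (by omega)]; congr 1
  have hcifv : ∀ i, i < 4 → cif p q i = 4 := by
    intro i h; simp [cif, h]
  have hcell : ∀ j, cellf p q j < 4 := by
    intro j; cases hpj : p j <;> cases hqj : q j <;> simp [cellf, hpj, hqj]
  have hci : ∀ i, cif p q i < 5 := by
    intro i; simp only [cif]; split
    · omega
    · exact Nat.lt_of_lt_of_le (hcell _) (by omega)
  -- E function
  set Ef : ℕ → ℕ := fun j => if j < n then cellf p q j else 0 with hEf
  have hE4 : ∀ j, Ef j < 4 := by
    intro j; simp only [hEf]; split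
    · exact hcell j
    · omega
  have hEb0 : ∀ j, bitc (Ef j) 0 = p j := by
    intro j; simp only [hEf]; split
    · exact hb0 j
    · next h => rw [hp, hxF 0 j (by omega)]; rfl
  have hEb1 : ∀ j, bitc (Ef j) 1 = q j := by
    intro j; simp only [hEf]; split
    · exact hb1 j
    · next h => rw [hq, hxF 1 j (by omega)]; rfl
  -- the "previous column" bit
  have hbc0 : ∀ k, (bitc (cif p q (k+3)) 0 = true ↔ ∃ i, i + 1 = k ∧ p i = true) := by
    intro k
    cases k with
    | zero =>
      rw [hcifv 3 (by omega)]
      constructor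
      · intro h; simp [bitc] at h
      · rintro ⟨i, hi, _⟩; omega
    | succ m =>
      rw [show m+1+3 = m+4 from rfl, hcif m, hb0 m]
      constructor
      · intro h; exact ⟨m, rfl, h⟩
      · rintro ⟨i, hi, h⟩
        obtain rfl : i = m := by omega
        exact h
  have hbc1 : ∀ k, (bitc (cif p q (k+3)) 1 = true ↔ ∃ i, i + 1 = k ∧ q i = true) := by
    intro k
    cases k with
    | zero =>
      rw [hcifv 3 (by omega)]
      constructor
      · intro h; simp [bitc] at h
      · rintro ⟨i, hi, _⟩; omega
    | succ m =>
      rw [show m+1+3 = m+4 from rfl, hcif m, hb1 m]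
      constructor
      · intro h; exact ⟨m, rfl, h⟩
      · rintro ⟨i, hi, h⟩
        obtain rfl : i = m := by omega
        exact h
  -- boolean helper
  have bfalse : ∀ b : Bool, ¬ b = true → b = false := by decide
  -- the three checks
  have hDck : ∀ j, j ≤ n → Dck (cif p q (j+2)) (cif p q (j+3)) (Ef j) = true := by
    intro j hj
    cases j with
    | zero =>
      rw [show (0:ℕ)+3 = 3 from rfl, hcifv 3 (by omega)]
      simp [Dck]
    | succ k =>
      rw [show k+1+3 = k+4 from rfl, show k+1+2 = k+3 from rfl, hcif k]
      simp only [Dck, Bool.or_eq_true, Bool.and_eq_true, beq_iff_eq]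
      right
      rw [hb0 k, hb1 k, hEb0 (k+1), hEb1 (k+1)]
      by_cases hpk : p k = true
      · tauto
      · by_cases hqk : q k = true
        · tauto
        · have h1 : q k = true ∨ p (k+1) = true ∨ ∃ i, i + 1 = k ∧ p i = true :=
            hGD 0 k (by omega) (bfalse _ hpk)
          have h2 : p k = true ∨ q (k+1) = true ∨ ∃ i, i + 1 = k ∧ q i = true :=
            hGD 1 k (by omega) (bfalse _ hqk)
          have h1' := h1.imp id (Or.imp id ((hbc0 k).2))
          have h2' := h2.imp id (Or.imp id ((hbc1 k).2))
          clear h1 h2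
          tauto
  have hAck : ∀ j, j ≤ n →
      Ack (cif p q (j+1)) (cif p q (j+2)) (cif p q (j+3)) (Ef j) = true := by
    intro j hj
    match j with
    | 0 =>
      rw [show (0:ℕ)+2 = 2 from rfl, hcifv 2 (by omega)]
      simp [Ack]
    | 1 =>
      rw [show (1:ℕ)+2 = 3 from rfl, hcifv 3 (by omega)]
      simp [Ack]
    | (k+2) =>
      rw [show k+2+1 = k+3 from rfl, show k+2+2 = k+4 from rfl,
        show k+2+3 = k+5 from rfl, hcif k, show k+5 = (k+1)+4 from rfl, hcif (k+1)]
      simp only [Ack, Bool.or_eq_true, Bool.and_eq_true, beq_iff_eq]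
      right
      rw [hb0 k, hb1 k, hb0 (k+1), hb1 (k+1), hEb0 (k+2), hEb1 (k+2)]
      constructor
      · by_cases hpk : p k = true
        · tauto
        · by_cases hqk1 : q (k+1) = true
          · tauto
          · have h1 : q (k+2) = true ∨ ∃ i, i + 1 = k ∧ p i = true :=
              hGA 0 k (by omega) (bfalse _ hpk) (bfalse _ hqk1)
            have h1' := h1.imp id ((hbc0 k).2)
            clear h1
            tauto
      · by_cases hqk : q k = true
        · tauto
        · by_cases hpk1 : p (k+1) = true
          · tauto
          · have h1 : p (k+2) = true ∨ ∃ i, i + 1 = k ∧ q i = true :=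
              hGA 1 k (by omega) (bfalse _ hqk) (bfalse _ hpk1)
            have h1' := h1.imp id ((hbc1 k).2)
            clear h1
            tauto
  have hBck : ∀ j, j ≤ n →
      Bck (cif p q j) (cif p q (j+1)) (cif p q (j+2)) (cif p q (j+3)) (Ef j) = true := by
    intro j hj
    match j with
    | 0 => rw [show (0:ℕ)+1 = 1 from rfl, hcifv 1 (by omega)]; simp [Bck]
    | 1 => rw [show (1:ℕ)+1 = 2 from rfl, hcifv 2 (by omega)]; simp [Bck]
    | 2 => rw [show (2:ℕ)+1 = 3 from rfl, hcifv 3 (by omega)]; simp [Bck]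
    | (k+3) =>
      rw [show k+3+1 = k+4 from rfl, hcif k,
        show k+3+3 = (k+2)+4 from rfl, hcif (k+2)]
      simp only [Bck, Bool.or_eq_true, Bool.and_eq_true, beq_iff_eq]
      rw [hb0 k, hb1 k, hb0 (k+2), hb1 (k+2), hEb0 (k+3), hEb1 (k+3)]
      by_cases hpk : p k = true
      · tauto
      · by_cases hqk : q k = true
        · tauto
        · by_cases hpk2 : p (k+2) = true
          · tauto
          · by_cases hqk2 : q (k+2) = true
            · tauto
            · have h1 : p (k+3) = true ∨ ∃ i, i + 1 = k ∧ p i = true :=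
                hGB 0 k (by omega) (bfalse _ hpk) (bfalse _ hpk2)
                  (bfalse _ hqk) (bfalse _ hqk2)
              have h2 : q (k+3) = true ∨ ∃ i, i + 1 = k ∧ q i = true :=
                hGB 1 k (by omega) (bfalse _ hqk) (bfalse _ hqk2)
                  (bfalse _ hpk) (bfalse _ hpk2)
              have h1' := h1.imp id ((hbc0 k).2)
              have h2' := h2.imp id ((hbc1 k).2)
              clear h1 h2
              tauto
  -- digit extraction
  have hdig : ∀ j e, transOk (stf p q j) e =
      (Dck (cif p q (j+2)) (cif p q (j+3)) e &&
        Ack (cif p q (j+1)) (cif p q (j+2)) (cif p q (j+3)) e &&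
        Bck (cif p q j) (cif p q (j+1)) (cif p q (j+2)) (cif p q (j+3)) e) := by
    intro j e
    have h0 := hci j; have h1 := hci (j+1); have h2 := hci (j+2); have h3 := hci (j+3)
    have d0 : stf p q j % 5 = cif p q j := by simp only [stf]; omega
    have d1 : stf p q j / 5 % 5 = cif p q (j+1) := by simp only [stf]; omega
    have d2 : stf p q j / 25 % 5 = cif p q (j+2) := by simp only [stf]; omega
    have d3 : stf p q j / 125 % 5 = cif p q (j+3) := by simp only [stf]; omega
    simp only [transOk, d0, d1, d2, d3]
  have hT : ∀ j, j < n → transOk (stf p q j) (cellf p q j) = true := by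
    intro j hjn
    have hEc : Ef j = cellf p q j := by simp only [hEf]; rw [if_pos hjn]
    rw [hdig, ← hEc, hDck j (by omega), hAck j (by omega), hBck j (by omega)]
    rfl
  have hF : transOk (stf p q n) 0 = true := by
    have hE0 : Ef n = 0 := by simp only [hEf]; rw [if_neg (by omega)]
    rw [hdig, ← hE0, hDck n le_rfl, hAck n le_rfl, hBck n le_rfl]
    rfl
  have hcore := core n p q hT hF
  -- identify the sum with the cardinality
  have hxm : ∀ (r : Fin 2) (c : Fin n), (xC C r c.val = true ↔ (r, c) ∈ C) := by
    intro r c; simp only [xC]; rw [dif_pos c.isLt]; simp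
  have hwsum : ∑ i ∈ Finset.range n, wN (cellf p q i) = C.card := by
    have h1 : ∀ i, wN (cellf p q i) =
        (if p i = true then 1 else 0) + (if q i = true then 1 else 0) := by
      intro i; cases hpi : p i <;> cases hqi : q i <;> simp [wN, cellf, hpi, hqi]
    calc ∑ i ∈ Finset.range n, wN (cellf p q i)
        = ∑ i ∈ Finset.range n,
            ((if p i = true then 1 else 0) + (if q i = true then 1 else 0)) :=
          Finset.sum_congr rfl (fun i _ => h1 i)
      _ = ∑ c : Fin n, ((if p c.val = true then 1 else 0) + (if q c.val = true then 1 else 0)) :=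
          (Fin.sum_univ_eq_sum_range _ n).symm
      _ = ∑ c : Fin n, ((if ((0:Fin 2), c) ∈ C then 1 else 0) +
            (if ((1:Fin 2), c) ∈ C then 1 else 0)) :=
          Finset.sum_congr rfl (fun c _ => by
            rw [if_congr (hxm 0 c) rfl rfl, if_congr (hxm 1 c) rfl rfl])
      _ = ∑ c : Fin n, (if ((0:Fin 2), c) ∈ C then 1 else 0) +
            ∑ c : Fin n, (if ((1:Fin 2), c) ∈ C then 1 else 0) := Finset.sum_add_distrib
      _ = ∑ r : Fin 2, ∑ c : Fin n, (if (r, c) ∈ C then 1 else 0) :=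
          (Fin.sum_univ_two (fun r : Fin 2 => ∑ c : Fin n, if (r, c) ∈ C then (1:ℕ) else 0)).symm
      _ = ∑ v : Fin 2 × Fin n, (if v ∈ C then 1 else 0) := (Fintype.sum_prod_type (fun v : Fin 2 × Fin n => if v ∈ C then (1:ℕ) else 0)).symm
      _ = C.card := by
          rw [Finset.sum_ite_mem, Finset.univ_inter, Finset.sum_const, smul_eq_mul, mul_one]
  omega

end Bridge

/-- `LD(P₂ □ Pₙ) ≥ ⌈(3n-1)/4⌉` for `n ≥ 2`; note `(3n+2)/4 = ⌈(3n-1)/4⌉` in ℕ. -/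
theorem stmt_7 (n : ℕ) (hn : 2 ≤ n) :
    (3 * n + 2) / 4 ≤ LD ((SimpleGraph.pathGraph 2).boxProd (SimpleGraph.pathGraph n)) := by
  unfold LD
  apply le_csInf
  · refine ⟨(Finset.univ : Finset (Fin 2 × Fin n)).card, Finset.univ, ⟨?_, ?_⟩, rfl⟩
    · intro v hv; simp at hv
    · intro u hu; simp at hu
  · rintro k ⟨C, hC, rfl⟩
    have := grid_main C hC
    omega
end

section
/- If C is a locating-dominating set of the 2×m grid graph G_{2,m} (with m ≥ 4), then every 2×4 block (induced subgraph on 4 consecutive columns) contains at least 2 vertices of C. -/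
open SimpleGraph Finset

/-- Every 2×4 block of `G_{2,m}` contains at least 2 vertices of a
locating-dominating set. -/
theorem stmt_10 (m : ℕ) (hm : 4 ≤ m) (C : Finset (Fin 2 × Fin m))
    (hC : IsLocDom ((SimpleGraph.pathGraph 2).boxProd (SimpleGraph.pathGraph m)) ↑C)
    (j : ℕ) (hj : j + 4 ≤ m) :
    2 ≤ (C.filter (fun v => j ≤ (v.2 : ℕ) ∧ (v.2 : ℕ) < j + 4)).card := by
  by_contra hcon
  push_neg at hcon
  set G := ((SimpleGraph.pathGraph 2).boxProd (SimpleGraph.pathGraph m)) with hG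
  set F := (C.filter (fun v => j ≤ (v.2 : ℕ) ∧ (v.2 : ℕ) < j + 4)) with hFdef
  have hF1 : F.card ≤ 1 := by omega
  have hF1' := Finset.card_le_one.mp hF1
  have hjm1 : j + 1 < m := by omega
  have hjm2 : j + 2 < m := by omega
  set u : Fin 2 × Fin m := (0, ⟨j+1, hjm1⟩) with hu
  set v : Fin 2 × Fin m := (1, ⟨j+1, hjm1⟩) with hv
  set w : Fin 2 × Fin m := (0, ⟨j+2, hjm2⟩) with hw
  have huv : u ≠ v := by simp [hu, hv, Prod.ext_iff]
  have huw : u ≠ w := by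
    simp [hu, hw, Prod.ext_iff, Fin.ext_iff]
  have hvw : v ≠ w := by simp [hv, hw, Prod.ext_iff]
  have key : ∀ x : Fin 2 × Fin m, ((x.2 : ℕ) = j+1 ∨ (x.2 : ℕ) = j+2) →
      ∀ z ∈ ((G.neighborSet x ∪ {x}) ∩ ↑C), z ∈ F := by
    intro x hx z hz
    obtain ⟨hz1, hz2⟩ := hz
    have hzC : z ∈ C := hz2
    rw [hFdef, Finset.mem_filter]
    refine ⟨hzC, ?_⟩
    rcases hz1 with hadj | heq
    · have : G.Adj x z := hadj
      rw [hG, SimpleGraph.boxProd_adj] at this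
      rcases this with ⟨_, h2⟩ | ⟨h2, _⟩
      · rw [← h2]; omega
      · rw [SimpleGraph.pathGraph_adj] at h2
        omega
    · have : z = x := heq
      rw [this]; omega
  have main : ∀ a b : Fin 2 × Fin m, a ≠ b → a ∉ C → b ∉ C →
      ((a.2 : ℕ) = j+1 ∨ (a.2 : ℕ) = j+2) → ((b.2 : ℕ) = j+1 ∨ (b.2 : ℕ) = j+2) → False := by
    intro a b hab haC hbC hca hcb
    obtain ⟨za, hza⟩ := hC.1 a haC
    obtain ⟨zb, hzb⟩ := hC.1 b hbC
    have hzaF := key a hca za hza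
    have hzbF := key b hcb zb hzb
    apply hC.2 a haC b hbC hab
    ext z
    constructor
    · intro hz
      have hzF := key a hca z hz
      have : z = zb := hF1' z hzF zb hzbF
      rw [this]; exact hzb
    · intro hz
      have hzF := key b hcb z hz
      have : z = za := hF1' z hzF za hzaF
      rw [this]; exact hza
  have memF : ∀ x : Fin 2 × Fin m, x ∈ C → ((x.2 : ℕ) = j+1 ∨ (x.2 : ℕ) = j+2) → x ∈ F := by
    intro x hxC hx
    rw [hFdef, Finset.mem_filter]
    exact ⟨hxC, by omega⟩
  have hcu : ((u.2 : ℕ) = j+1 ∨ (u.2 : ℕ) = j+2) := by left; rfl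
  have hcv : ((v.2 : ℕ) = j+1 ∨ (v.2 : ℕ) = j+2) := by left; rfl
  have hcw : ((w.2 : ℕ) = j+1 ∨ (w.2 : ℕ) = j+2) := by right; rfl
  by_cases hu1 : u ∈ C
  · by_cases hv1 : v ∈ C
    · exact huv (hF1' u (memF u hu1 hcu) v (memF v hv1 hcv))
    · by_cases hw1 : w ∈ C
      · exact huw (hF1' u (memF u hu1 hcu) w (memF w hw1 hcw))
      · exact main v w hvw hv1 hw1 hcv hcw
  · by_cases hv1 : v ∈ C
    · by_cases hw1 : w ∈ C
      · exact hvw (hF1' v (memF v hv1 hcv) w (memF w hw1 hcw))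
      · exact main u w huw hu1 hw1 hcu hcw
    · exact main u v huv hu1 hv1 hcu hcv
end

section
/- If C is a locating-dominating set of the 3×m grid graph G_{3,m} (with m ≥ 3), then every 3×3 block (induced subgraph on 3 consecutive columns) contains at least 2 vertices of C. -/
open SimpleGraph Finset

/-- Every 3×3 block of `G_{3,m}` contains at least 2 vertices of a
locating-dominating set. -/
theorem stmt_11 (m : ℕ) (hm : 3 ≤ m) (C : Finset (Fin 3 × Fin m))
    (hC : IsLocDom ((SimpleGraph.pathGraph 3).boxProd (SimpleGraph.pathGraph m)) ↑C)
    (j : ℕ) (hj : j + 3 ≤ m) :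
    2 ≤ (C.filter (fun v => j ≤ (v.2 : ℕ) ∧ (v.2 : ℕ) < j + 3)).card := by
  set G := (SimpleGraph.pathGraph 3).boxProd (SimpleGraph.pathGraph m) with hG
  set S := C.filter (fun v => j ≤ (v.2 : ℕ) ∧ (v.2 : ℕ) < j + 3) with hS
  by_contra hcon
  push_neg at hcon
  have hcard : S.card ≤ 1 := by omega
  have hsub := Finset.card_le_one.mp hcard
  have hc : j + 1 < m := by omega
  set c : Fin m := ⟨j + 1, hc⟩ with hcdef
  -- codes of middle-column vertices lie in S
  have hcode : ∀ a : Fin 3 × Fin m, a.2 = c →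
      (G.neighborSet a ∪ {a}) ∩ ↑C ⊆ ↑S := by
    rintro a ha z ⟨hz1, hz2⟩
    simp only [Set.mem_union, SimpleGraph.mem_neighborSet, Set.mem_singleton_iff] at hz1
    simp only [hS, Finset.coe_filter, Set.mem_setOf_eq]
    refine ⟨hz2, ?_⟩
    have ha2 : (a.2 : ℕ) = j + 1 := by rw [ha]
    rcases hz1 with hadj | rfl
    · rw [hG, SimpleGraph.boxProd_adj] at hadj
      rcases hadj with ⟨h1, h2⟩ | ⟨h1, h2⟩
      · have : (z.2 : ℕ) = j + 1 := by rw [← h2]; exact ha2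
        omega
      · rw [SimpleGraph.pathGraph_adj] at h1
        omega
    · omega
  -- key: two distinct middle-column vertices outside C give contradiction
  have key : ∀ a b : Fin 3 × Fin m, a.2 = c → b.2 = c → a ∉ C → b ∉ C → a ≠ b → False := by
    intro a b ha hb haC hbC hab
    have hnA := hC.1 a (by simpa using haC)
    have hnB := hC.1 b (by simpa using hbC)
    apply hC.2 a (by simpa using haC) b (by simpa using hbC) hab
    obtain ⟨x, hx⟩ := hnA
    obtain ⟨y, hy⟩ := hnB
    have hxS : x ∈ S := hcode a ha hx
    have hyS : y ∈ S := hcode b hb hy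
    have hxy : x = y := hsub x hxS y hyS
    ext z
    constructor
    · intro hz
      have : z = y := hxy ▸ hsub z (hcode a ha hz) x hxS
      exact this ▸ hy
    · intro hz
      have : z = x := hsub z (hcode b hb hz) x hxS
      exact this ▸ hx
  -- middle column vertices
  have hmem : ∀ r : Fin 3, (r, c) ∈ C → (r, c) ∈ S := by
    intro r hr
    simp only [hS, Finset.mem_filter]
    exact ⟨hr, by simp [hcdef]⟩
  -- at most one of the three is in C
  have hpair : ∀ r s : Fin 3, r ≠ s → ¬((r, c) ∈ C ∧ (s, c) ∈ C) := by
    rintro r s hrs ⟨hr, hs⟩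
    have : ({(r, c), (s, c)} : Finset (Fin 3 × Fin m)) ⊆ S := by
      intro z hz
      simp only [Finset.mem_insert, Finset.mem_singleton] at hz
      rcases hz with rfl | rfl
      · exact hmem r hr
      · exact hmem s hs
    have h2 : 2 ≤ S.card := by
      have := Finset.card_le_card this
      rwa [Finset.card_insert_of_notMem (by simp [hrs]), Finset.card_singleton] at this
    omega
  have ne01 : ((0 : Fin 3), c) ≠ ((1 : Fin 3), c) := by simp [Prod.ext_iff]
  have ne02 : ((0 : Fin 3), c) ≠ ((2 : Fin 3), c) := by simp [Prod.ext_iff]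
  have ne12 : ((1 : Fin 3), c) ≠ ((2 : Fin 3), c) := by simp [Prod.ext_iff]
  by_cases h0 : ((0 : Fin 3), c) ∈ C
  · have h1 : ((1 : Fin 3), c) ∉ C := fun h => hpair 0 1 (by decide) ⟨h0, h⟩
    have h2 : ((2 : Fin 3), c) ∉ C := fun h => hpair 0 2 (by decide) ⟨h0, h⟩
    exact key _ _ rfl rfl h1 h2 ne12
  · by_cases h1 : ((1 : Fin 3), c) ∈ C
    · have h2 : ((2 : Fin 3), c) ∉ C := fun h => hpair 1 2 (by decide) ⟨h1, h⟩
      exact key _ _ rfl rfl h0 h2 ne02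
    · exact key _ _ rfl rfl h0 h1 ne01
end

section
/- For every k ≥ 1, there exists a graph G on k + 2^k vertices and an orientation G⃗ of G such that the adjacency dimension of G is at most k, while the broadcast dimension of the directed graph G⃗ is at least 2^k. -/
open SimpleGraph Finset

/-!
Take a hub `i` for every `i` in a finite linear order `ι` with bottom, and a vertex for every
subset `S ⊆ ι`; the class of `S` is `max S` (`⊥` for `S = ∅`), that of a hub is the hub itself.
Orient hub `i → S` when `max S = i`, and `S → v` when the class of `v` lies in `S` but is not
`max S`. Every out-neighbourhood is then a union of classes (less the vertex itself), so two
vertices of a class are in-twins and no broadcast from a third vertex tells them apart: a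
resolving broadcast is positive on all but one vertex per class, of total weight at least
`2 ^ |ι|`. In the underlying graph, the hubs `i ≠ ⊥` read off whether `i ∈ S`, and the vertex `∅`
separates the pairs that are left, which differ only in `⊥`.
-/

section Undirected

variable {V W : Type*}

lemma min_edist_two_eq_zero_iff (G : SimpleGraph V) {z x : V} :
    min (G.edist z x) 2 = 0 ↔ z = x := by
  rw [← edist_eq_zero_iff (G := G), min_eq_iff]
  simp only [OfNat.ofNat_ne_zero, false_and, or_false, and_iff_left_iff_imp]
  intro h
  simp [h]

lemma min_edist_two_eq_one_iff (G : SimpleGraph V) {z x : V} :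
    min (G.edist z x) 2 = 1 ↔ G.Adj z x := by
  rw [← edist_eq_one_iff_adj, min_eq_iff]
  simp only [OfNat.ofNat_ne_one, false_and, or_false, and_iff_left_iff_imp]
  intro h
  simp [h]

def IsLocating (G : SimpleGraph V) (A : Set V) : Prop :=
  ∀ x ∉ A, ∀ y ∉ A, x ≠ y → ∃ z ∈ A, ¬(G.Adj z x ↔ G.Adj z y)

lemma IsLocating.isAdjResolving {G : SimpleGraph V} {A : Set V} (h : IsLocating G A) :
    IsAdjResolving G A := by
  intro x y hxy
  by_cases hx : x ∈ A
  · exact ⟨x, hx, fun heq => hxy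
      ((min_edist_two_eq_zero_iff G).1 (heq.symm.trans ((min_edist_two_eq_zero_iff G).2 rfl)))⟩
  by_cases hy : y ∈ A
  · exact ⟨y, hy, fun heq => hxy
      ((min_edist_two_eq_zero_iff G).1 (heq.trans ((min_edist_two_eq_zero_iff G).2 rfl))).symm⟩
  obtain ⟨z, hz, hsep⟩ := h x hx y hy hxy
  exact ⟨z, hz, fun heq => hsep
    ((min_edist_two_eq_one_iff G).symm.trans (heq ▸ min_edist_two_eq_one_iff G))⟩

lemma IsLocating.comap {G : SimpleGraph W} {A : Set W} (h : IsLocating G A) (e : V ≃ W) :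
    IsLocating (G.comap e) (e ⁻¹' A) := by
  intro x hx y hy hxy
  obtain ⟨z, hz, hsep⟩ := h (e x) hx (e y) hy (e.injective.ne hxy)
  exact ⟨e.symm z, by simpa using hz, by simpa using hsep⟩

lemma adim_comap_le [Fintype V] [DecidableEq V] {G : SimpleGraph W} {A : Finset W}
    (h : IsLocating G A) (e : V ≃ W) : adim (G.comap e) ≤ A.card := by
  refine Nat.sInf_le ⟨A.map e.symm.toEmbedding, ?_, card_map _⟩
  rw [coe_map, Equiv.coe_toEmbedding, e.image_symm_eq_preimage]
  exact (h.comap e).isAdjResolving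

end Undirected

section Directed

variable {V W ι : Type*} {D : V → V → Prop} {u v w w' z : V}

lemma dPath_zero_iff : DPath D u v 0 ↔ u = v :=
  ⟨fun ⟨_, h0, h1, _⟩ => h0.symm.trans h1, fun h => ⟨fun _ => u, rfl, h, fun i => i.elim0⟩⟩

lemma dPath_succ_iff {m : ℕ} : DPath D u v (m + 1) ↔ ∃ x, DPath D u x m ∧ D x v := by
  constructor
  · rintro ⟨p, h0, h1, hp⟩
    refine ⟨p (Fin.last m).castSucc, ⟨Fin.init p, h0, rfl, fun i => ?_⟩, ?_⟩
    · simpa only [Fin.init, Fin.succ_castSucc] using hp i.castSucc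
    · simpa [h1] using hp (Fin.last m)
  · rintro ⟨x, ⟨p, h0, h1, hp⟩, hxv⟩
    refine ⟨Fin.snoc p v, by simpa using h0, by simp, fun i => ?_⟩
    induction i using Fin.lastCases with
    | last => simpa [h1] using hxv
    | cast j =>
      rw [Fin.succ_castSucc, Fin.snoc_castSucc, Fin.snoc_castSucc]
      exact hp j

lemma ddist_le_of_dPath {m : ℕ} (h : DPath D u v m) : ddist D u v ≤ m :=
  sInf_le ⟨m, h, rfl⟩

lemma ddist_self (u : V) : ddist D u u = 0 :=
  nonpos_iff_eq_zero.1 (ddist_le_of_dPath (dPath_zero_iff.2 rfl))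

lemma one_le_ddist (h : u ≠ v) : 1 ≤ ddist D u v := by
  refine le_sInf ?_
  rintro _ ⟨_ | m, hp, rfl⟩
  · exact absurd (dPath_zero_iff.1 hp) h
  · exact_mod_cast m.succ_pos

lemma isDirResolvingBroadcast_one : IsDirResolvingBroadcast D fun _ => 1 := by
  intro x y hxy
  refine ⟨x, one_pos, fun heq => ?_⟩
  rw [ddist_self, min_eq_left zero_le] at heq
  have : (1 : ℕ∞) ≤ 0 := heq ▸ le_min (one_le_ddist hxy) (by norm_num)
  exact absurd this (by norm_num)

def InTwins (D : V → V → Prop) (w w' : V) : Prop :=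
  ∀ u, u ≠ w → u ≠ w' → (D u w ↔ D u w')

lemma InTwins.symm (h : InTwins D w w') : InTwins D w' w :=
  fun u hw' hw => (h u hw hw').symm

lemma InTwins.comap {e : W → V} (he : Function.Injective e) {w w' : W}
    (h : InTwins D (e w) (e w')) : InTwins (fun u v => D (e u) (e v)) w w' :=
  fun u hw hw' => h (e u) (he.ne hw) (he.ne hw')

/-- A directed path to `w` either meets `w'` or its last arc can be redirected to `w'`. -/
lemma InTwins.exists_dPath_le (h : InTwins D w w') (hz : z ≠ w) :
    ∀ {m : ℕ}, DPath D z w m → ∃ m' ≤ m, DPath D z w' m'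
  | 0, hp => absurd (dPath_zero_iff.1 hp) hz
  | m + 1, hp => by
    obtain ⟨x, hzx, hxw⟩ := dPath_succ_iff.1 hp
    by_cases hx' : x = w'
    · exact ⟨m, m.le_succ, hx' ▸ hzx⟩
    by_cases hx : x = w
    · obtain ⟨m', hm', hp'⟩ := h.exists_dPath_le hz (hx ▸ hzx)
      exact ⟨m', by omega, hp'⟩
    · exact ⟨m + 1, le_rfl, dPath_succ_iff.2 ⟨x, hzx, (h x hx hx').1 hxw⟩⟩

lemma InTwins.ddist_le (h : InTwins D w w') (hz : z ≠ w) : ddist D z w' ≤ ddist D z w := by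
  refine le_sInf ?_
  rintro _ ⟨m, hp, rfl⟩
  obtain ⟨m', hm', hp'⟩ := h.exists_dPath_le hz hp
  exact (ddist_le_of_dPath hp').trans (Nat.cast_le.2 hm')

lemma InTwins.ddist_eq (h : InTwins D w w') (hz : z ≠ w) (hz' : z ≠ w') :
    ddist D z w = ddist D z w' :=
  le_antisymm (h.symm.ddist_le hz') (h.ddist_le hz)

lemma isOrientation_fromRel (h : ∀ u v, ¬(D u v ∧ D v u)) : IsOrientation (fromRel D) D := by
  refine ⟨fun u v => ?_, h⟩
  rw [fromRel_adj]
  refine ⟨And.right, fun huv => ⟨?_, huv⟩⟩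
  rintro rfl
  exact h u u ⟨huv.elim id id, huv.elim id id⟩

lemma IsOrientation.comap {G : SimpleGraph W} {D : W → W → Prop} (h : IsOrientation G D)
    (e : V → W) : IsOrientation (G.comap e) (fun u v => D (e u) (e v)) :=
  ⟨fun u v => h.1 (e u) (e v), fun u v => h.2 (e u) (e v)⟩

variable [Fintype V] [Fintype ι]

lemma card_sub_card_le_sum_of_inTwins (s : V → ι) (hs : ∀ w w', s w = s w' → InTwins D w w')
    {f : V → ℕ} (hf : IsDirResolvingBroadcast D f) :
    Fintype.card V - Fintype.card ι ≤ ∑ v, f v := by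
  classical
  set Z := univ.filter fun v => f v = 0
  have hZ : Z.card ≤ Fintype.card ι := by
    refine card_le_card_of_injOn s (fun _ _ => mem_coe.2 (mem_univ _)) ?_
    intro w hw w' hw' hsw
    by_contra hne
    obtain ⟨z, hz, hsep⟩ := hf w w' hne
    replace hw : f w = 0 := by simpa [Z] using hw
    replace hw' : f w' = 0 := by simpa [Z] using hw'
    exact hsep (by rw [(hs w w' hsw).ddist_eq (by rintro rfl; omega) (by rintro rfl; omega)])
  have hpos : Zᶜ.card ≤ ∑ v, f v :=
    calc Zᶜ.card = ∑ v ∈ Zᶜ, 1 := card_eq_sum_ones _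
      _ ≤ ∑ v ∈ Zᶜ, f v := sum_le_sum fun v hv => Nat.one_le_iff_ne_zero.2 (by simpa [Z] using hv)
      _ ≤ ∑ v, f v := sum_le_sum_of_subset (subset_univ _)
  rw [card_compl] at hpos
  omega

lemma card_sub_card_le_dirBdim (s : V → ι) (hs : ∀ w w', s w = s w' → InTwins D w w') :
    Fintype.card V - Fintype.card ι ≤ dirBdim D :=
  le_csInf ⟨_, _, isDirResolvingBroadcast_one, rfl⟩ fun _ ⟨_, hf, hsum⟩ =>
    hsum ▸ card_sub_card_le_sum_of_inTwins s hs hf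

end Directed

section Hub

variable (ι : Type*) [LinearOrder ι] [OrderBot ι]

def hubClass : ι ⊕ Finset ι → ι :=
  Sum.elim id fun S => S.sup id

def hubArc : ι ⊕ Finset ι → ι ⊕ Finset ι → Prop
  | .inl _, .inl _ => False
  | .inl i, .inr S => S.sup id = i
  | .inr S, v => hubClass ι v ∈ S ∧ hubClass ι v ≠ S.sup id

def hubGraph : SimpleGraph (ι ⊕ Finset ι) :=
  fromRel (hubArc ι)

variable {ι}

lemma hubArc_inl_iff {i : ι} {v : ι ⊕ Finset ι} (hv : v ≠ .inl i) :
    hubArc ι (.inl i) v ↔ hubClass ι v = i := by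
  cases v with
  | inl j => simpa [hubArc, hubClass] using fun h => hv (congrArg _ h)
  | inr S => rfl

lemma inTwins_hubArc {w w' : ι ⊕ Finset ι} (h : hubClass ι w = hubClass ι w') :
    InTwins (hubArc ι) w w' := by
  rintro (i | S) hw hw'
  · rw [hubArc_inl_iff hw.symm, hubArc_inl_iff hw'.symm, h]
  · exact Iff.of_eq (by simp only [hubArc, h])

lemma hubArc_asymm (u v : ι ⊕ Finset ι) : ¬(hubArc ι u v ∧ hubArc ι v u) := by
  rintro ⟨huv, hvu⟩
  rcases u with i | S <;> rcases v with j | T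
  · exact huv
  · exact hvu.2 huv.symm
  · exact huv.2 hvu.symm
  · exact huv.2 (le_antisymm (le_sup (f := id) huv.1) (le_sup (f := id) hvu.1))

lemma isOrientation_hubGraph : IsOrientation (hubGraph ι) (hubArc ι) :=
  isOrientation_fromRel hubArc_asymm

lemma not_hubGraph_adj_inl_inl (i j : ι) : ¬(hubGraph ι).Adj (.inl i) (.inl j) :=
  fun h => (isOrientation_hubGraph.1 _ _).1 h |>.elim id id

lemma hubGraph_adj_inl_inr {i : ι} {S : Finset ι} (hS : S.Nonempty) :
    (hubGraph ι).Adj (.inl i) (.inr S) ↔ i ∈ S := by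
  obtain ⟨t, ht, hsup⟩ := S.exists_mem_eq_sup hS id
  rw [hubGraph, fromRel_adj]
  simp only [hubArc, hubClass, Sum.elim_inl, id, ne_eq, reduceCtorEq, not_false_eq_true,
    true_and]
  constructor
  · rintro (h | h)
    · exact h ▸ hsup ▸ ht
    · exact h.1
  · intro hi
    by_cases h : S.sup id = i
    · exact .inl h
    · exact .inr ⟨hi, Ne.symm h⟩

lemma hubGraph_adj_empty_inl_bot : (hubGraph ι).Adj (.inr ∅) (.inl ⊥) :=
  (isOrientation_hubGraph.1 _ _).2 (.inr rfl)

lemma hubGraph_adj_empty_inr {S : Finset ι} :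
    (hubGraph ι).Adj (.inr ∅) (.inr S) ↔ ⊥ ∈ S ∧ ∃ i ∈ S, i ≠ ⊥ := by
  rw [isOrientation_hubGraph.1]
  simp [hubArc, hubClass, eq_comm (a := ⊥)]

variable (ι) [Fintype ι]

def hubLocatingSet : Finset (ι ⊕ Finset ι) :=
  univ.image fun i => if i = ⊥ then .inr ∅ else .inl i

variable {ι}

lemma card_hubLocatingSet : (hubLocatingSet ι).card = Fintype.card ι := by
  refine card_image_of_injective _ fun i j hij => ?_
  by_cases hi : i = ⊥ <;> by_cases hj : j = ⊥ <;> simp_all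

lemma inl_mem_hubLocatingSet {i : ι} (hi : i ≠ ⊥) : .inl i ∈ hubLocatingSet ι :=
  mem_image.2 ⟨i, mem_univ _, if_neg hi⟩

lemma empty_mem_hubLocatingSet : .inr ∅ ∈ hubLocatingSet ι :=
  mem_image.2 ⟨⊥, mem_univ _, if_pos rfl⟩

lemma eq_of_notMem_hubLocatingSet {x : ι ⊕ Finset ι} (hx : x ∉ hubLocatingSet ι) :
    x = .inl ⊥ ∨ ∃ S : Finset ι, S.Nonempty ∧ x = .inr S := by
  rcases x with i | S
  · exact .inl (congrArg _ (not_not.1 fun hi => hx (inl_mem_hubLocatingSet hi)))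
  · refine .inr ⟨S, nonempty_iff_ne_empty.2 ?_, rfl⟩
    rintro rfl
    exact hx empty_mem_hubLocatingSet

lemma exists_separating_inl_bot_inr {S : Finset ι} (hS : S.Nonempty) :
    ∃ z ∈ hubLocatingSet ι, ¬((hubGraph ι).Adj z (.inl ⊥) ↔ (hubGraph ι).Adj z (.inr S)) := by
  by_cases h : ∃ i ∈ S, i ≠ ⊥
  · obtain ⟨i, hiS, hi⟩ := h
    refine ⟨.inl i, inl_mem_hubLocatingSet hi, ?_⟩
    simp [not_hubGraph_adj_inl_inl, hubGraph_adj_inl_inr hS, hiS]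
  · refine ⟨.inr ∅, empty_mem_hubLocatingSet, ?_⟩
    simp [hubGraph_adj_empty_inl_bot, hubGraph_adj_empty_inr, h]

lemma exists_separating_inr_inr {S T : Finset ι} (hS : S.Nonempty) (hT : T.Nonempty)
    (hST : S ≠ T) :
    ∃ z ∈ hubLocatingSet ι, ¬((hubGraph ι).Adj z (.inr S) ↔ (hubGraph ι).Adj z (.inr T)) := by
  by_cases h : ∃ i ≠ ⊥, ¬(i ∈ S ↔ i ∈ T)
  · obtain ⟨i, hi, hiST⟩ := h
    refine ⟨.inl i, inl_mem_hubLocatingSet hi, ?_⟩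
    rwa [hubGraph_adj_inl_inr hS, hubGraph_adj_inl_inr hT]
  push Not at h
  refine ⟨.inr ∅, empty_mem_hubLocatingSet, ?_⟩
  rw [hubGraph_adj_empty_inr, hubGraph_adj_empty_inr]
  have hbot : ¬(⊥ ∈ S ↔ ⊥ ∈ T) := fun hb =>
    hST (ext fun i => if hi : i = ⊥ then hi ▸ hb else h i hi)
  -- `S` and `T` agree off `⊥`, are nonempty and differ, so neither is `{⊥}`.
  have htop : ∃ i ∈ S, i ≠ ⊥ := by
    by_contra! hS'
    obtain ⟨j, hj⟩ := hT
    have hj' : j = ⊥ := not_not.1 fun hj' => hj' (hS' j ((h j hj').2 hj))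
    obtain ⟨i, hi⟩ := hS
    exact hbot ⟨fun _ => hj' ▸ hj, fun _ => hS' i hi ▸ hi⟩
  have htop' : ∃ i ∈ T, i ≠ ⊥ :=
    let ⟨i, hiS, hi⟩ := htop
    ⟨i, (h i hi).1 hiS, hi⟩
  simpa only [htop, htop', and_true] using hbot

lemma isLocating_hubLocatingSet : IsLocating (hubGraph ι) ↑(hubLocatingSet ι) := by
  intro x hx y hy hxy
  rcases eq_of_notMem_hubLocatingSet hx with rfl | ⟨S, hS, rfl⟩ <;>
    rcases eq_of_notMem_hubLocatingSet hy with rfl | ⟨T, hT, rfl⟩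
  · exact absurd rfl hxy
  · exact exists_separating_inl_bot_inr hT
  · obtain ⟨z, hz, hsep⟩ := exists_separating_inl_bot_inr hS
    exact ⟨z, hz, fun h => hsep h.symm⟩
  · exact exists_separating_inr_inr hS hT fun h => hxy (congrArg _ h)

end Hub

/-- There is a graph `G` on `k + 2^k` vertices with `adim(G) ≤ k` having an
orientation `G⃗` with `bdim(G⃗) ≥ 2^k`. -/
theorem stmt_13 (k : ℕ) (hk : 1 ≤ k) :
    ∃ (G : SimpleGraph (Fin (k + 2 ^ k))) (D : Fin (k + 2 ^ k) → Fin (k + 2 ^ k) → Prop),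
      IsOrientation G D ∧ adim G ≤ k ∧ 2 ^ k ≤ dirBdim D := by
  have : NeZero k := ⟨by omega⟩
  let e : Fin (k + 2 ^ k) ≃ Fin k ⊕ Finset (Fin k) := Fintype.equivOfCardEq (by simp)
  refine ⟨(hubGraph (Fin k)).comap e, fun u v => hubArc (Fin k) (e u) (e v),
    isOrientation_hubGraph.comap e, ?_, ?_⟩
  · calc adim ((hubGraph (Fin k)).comap e) ≤ (hubLocatingSet (Fin k)).card :=
          adim_comap_le isLocating_hubLocatingSet e
      _ = k := by rw [card_hubLocatingSet, Fintype.card_fin]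
  · simpa using card_sub_card_le_dirBdim (hubClass (Fin k) ∘ e)
      fun w w' h => (inTwins_hubArc h).comap e.injective
end

section
/- The broadcast dimension of the complete graph K_n is n - 1. -/
open SimpleGraph Finset

lemma top_edist {n : ℕ} {u v : Fin n} (h : u ≠ v) :
    (⊤ : SimpleGraph (Fin n)).edist u v = 1 :=
  SimpleGraph.edist_eq_one_iff_adj.mpr h

/-- The broadcast dimension of the complete graph `Kₙ` is `n - 1`. -/
theorem stmt_15 (n : ℕ) : bdim (⊤ : SimpleGraph (Fin n)) = n - 1 := by
  classical
  rcases Nat.lt_or_ge n 2 with h | h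
  · have hmem : (0 : ℕ) ∈ {m | ∃ f : Fin n → ℕ,
        IsResolvingBroadcast (⊤ : SimpleGraph (Fin n)) f ∧ ∑ v, f v = m} := by
      refine ⟨fun _ => 0, ?_, by simp⟩
      intro x y hxy
      exact absurd (by have := x.2; have := y.2; exact Fin.ext (by omega)) hxy
    rw [bdim, Nat.sInf_eq_zero.mpr (Or.inl hmem)]
    omega
  · set z0 : Fin n := ⟨0, by omega⟩ with hz0
    have hmem : (n - 1 : ℕ) ∈ {m | ∃ f : Fin n → ℕ,
        IsResolvingBroadcast (⊤ : SimpleGraph (Fin n)) f ∧ ∑ v, f v = m} := by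
      refine ⟨fun v => if v = z0 then 0 else 1, ?_, ?_⟩
      · intro x y hxy
        rcases eq_or_ne x z0 with hx | hx
        · have hy : y ≠ z0 := by rw [hx] at hxy; exact (Ne.symm hxy)
          refine ⟨y, by simp [hy], ?_⟩
          rw [top_edist (Ne.symm hxy), SimpleGraph.edist_self]
          simp [hy]
        · refine ⟨x, by simp [hx], ?_⟩
          rw [top_edist hxy, SimpleGraph.edist_self]
          simp [hx]
      · simp only []
        rw [Finset.sum_ite, Finset.sum_const, Finset.sum_const]
        simp [Finset.filter_ne', Finset.card_erase_of_mem]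
    refine le_antisymm (Nat.sInf_le hmem) (le_csInf ⟨_, hmem⟩ ?_)
    rintro m ⟨f, hres, hsum⟩
    have key : ∀ x y : Fin n, f x = 0 → f y = 0 → x = y := by
      intro x y hx hy
      by_contra hne
      obtain ⟨z, hz, hmin⟩ := hres x y hne
      have hzx : z ≠ x := fun h => by rw [h] at hz; omega
      have hzy : z ≠ y := fun h => by rw [h] at hz; omega
      exact hmin (by rw [top_edist hzx, top_edist hzy])
    set S : Finset (Fin n) := Finset.univ.filter (fun v => f v ≠ 0) with hS
    have hcompl : (Finset.univ.filter (fun v => f v = 0)).card ≤ 1 := by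
      apply Finset.card_le_one.mpr
      intro a ha b hb
      simp only [Finset.mem_filter] at ha hb
      exact key a b ha.2 hb.2
    have hsplit := Finset.card_filter_add_card_filter_not
      (s := (Finset.univ : Finset (Fin n))) (p := fun v => f v = 0)
    have hScard : n - 1 ≤ S.card := by
      have : (Finset.univ : Finset (Fin n)).card = n := by simp
      have : (Finset.univ.filter (fun v => f v = 0)).card + S.card = n := by
        simpa [hS] using hsplit
      omega
    calc n - 1 ≤ S.card := hScard
      _ = ∑ _v ∈ S, 1 := by rw [Finset.card_eq_sum_ones]
      _ ≤ ∑ v ∈ S, f v := Finset.sum_le_sum (fun v hv => by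
          simp only [hS, Finset.mem_filter] at hv; omega)
      _ ≤ ∑ v, f v := Finset.sum_le_sum_of_subset (Finset.filter_subset _ _)
      _ = m := hsum
end

section
/- For every graph G of order n, n ≥ adim(G) ≥ bdim(G), and bdim(G) = Ω(log n); more precisely, adim(G) ≥ bdim(G) and there is a constant c > 0 such that bdim(G) ≥ c·log n for all graphs G on n vertices. -/
/-! A vertex `z` with `f z = k > 0` reads every vertex at one of the `k + 2` truncated distances
`0, …, k + 1`, and a resolving broadcast separates all vertices by these readings; hence
`n ≤ ∏ (f z + 2) ≤ 3 ^ ∑ f z`, i.e. `bdim G ≥ log₃ n`. The constant broadcast `1` resolves every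
graph, giving `adim G ≤ n`, and `bdim G ≤ adim G` because `{0,1}`-valued broadcasts are broadcasts. -/

open SimpleGraph Finset

/-- The adjacency dimension as the minimum total weight of a resolving
broadcast taking values in {0,1}. -/
noncomputable def adimB {V : Type*} [Fintype V] (G : SimpleGraph V) : ℕ :=
  sInf {n | ∃ f : V → ℕ, IsResolvingBroadcast G f ∧ (∀ v, f v ≤ 1) ∧ ∑ v, f v = n}


variable {V : Type*} {G : SimpleGraph V}

lemma isResolvingBroadcast_one (G : SimpleGraph V) : IsResolvingBroadcast G 1 := by
  intro x y hxy
  refine ⟨x, one_pos, ?_⟩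
  have hxy' : G.edist x y ≠ 0 := fun h => hxy (edist_eq_zero_iff.mp h)
  rw [edist_self, min_eq_left zero_le]
  exact (lt_min (pos_iff_ne_zero.mpr hxy') (by norm_num)).ne

lemma add_two_le_three_pow {k : ℕ} (hk : 0 < k) : k + 2 ≤ 3 ^ k := by
  have bernoulli := one_add_mul_le_pow (show (-2 : ℤ) ≤ 2 by norm_num) k
  norm_num at bernoulli
  zify
  linarith [show (1 : ℤ) ≤ k by exact_mod_cast hk]

noncomputable def broadcastSignal (G : SimpleGraph V) (f : V → ℕ) (x z : V) : ℕ :=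
  if 0 < f z then (min (G.edist z x) ((f z : ℕ∞) + 1)).toNat else 0

lemma broadcastSignal_mem_range (G : SimpleGraph V) (f : V → ℕ) (x z : V) :
    broadcastSignal G f x z ∈ range (if 0 < f z then f z + 2 else 1) := by
  unfold broadcastSignal
  split_ifs
  · exact mem_range_succ_iff.mpr (ENat.toNat_le_of_le_natCast (by simp))
  · simp

lemma IsResolvingBroadcast.broadcastSignal_injective {f : V → ℕ}
    (hf : IsResolvingBroadcast G f) : Function.Injective (broadcastSignal G f) := by
  intro x y hxy
  by_contra hne
  obtain ⟨z, hz, hdiff⟩ := hf x y hne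
  have hxyz := congr_fun hxy z
  simp only [broadcastSignal, if_pos hz] at hxyz
  have hfin (w : V) : min (G.edist z w) ((f z : ℕ∞) + 1) ≠ ⊤ :=
    ne_top_of_le_ne_top (by simp) (min_le_right _ _)
  exact hdiff (by rw [← ENat.natCast_toNat (hfin x), ← ENat.natCast_toNat (hfin y), hxyz])

theorem IsResolvingBroadcast.card_le_three_pow_sum [Fintype V] {f : V → ℕ}
    (hf : IsResolvingBroadcast G f) : Fintype.card V ≤ 3 ^ ∑ v, f v := by
  classical
  calc Fintype.card V
      ≤ #(Fintype.piFinset fun z => range (if 0 < f z then f z + 2 else 1)) :=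
        card_le_card_of_injOn _ (fun x _ => Fintype.mem_piFinset.mpr
          (broadcastSignal_mem_range G f x)) hf.broadcastSignal_injective.injOn
    _ = ∏ z, (if 0 < f z then f z + 2 else 1) := by simp
    _ ≤ ∏ z, 3 ^ f z := prod_le_prod' fun z _ => by
        split_ifs with hz
        · exact add_two_le_three_pow hz
        · simp_all
    _ = 3 ^ ∑ v, f v := prod_pow_eq_pow_sum _ _ _

variable [Fintype V]

lemma exists_isResolvingBroadcast_sum_eq_bdim (G : SimpleGraph V) :
    ∃ f : V → ℕ, IsResolvingBroadcast G f ∧ ∑ v, f v = bdim G :=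
  Nat.sInf_mem (s := {n | ∃ f : V → ℕ, IsResolvingBroadcast G f ∧ ∑ v, f v = n})
    ⟨_, 1, isResolvingBroadcast_one G, rfl⟩

lemma adimB_le_card (G : SimpleGraph V) : adimB G ≤ Fintype.card V :=
  Nat.sInf_le ⟨1, isResolvingBroadcast_one G, fun _ => le_rfl, by simp⟩

lemma bdim_le_adimB (G : SimpleGraph V) : bdim G ≤ adimB G := by
  obtain ⟨f, hf, -, hsum⟩ := Nat.sInf_mem
    (s := {n | ∃ f : V → ℕ, IsResolvingBroadcast G f ∧ (∀ v, f v ≤ 1) ∧ ∑ v, f v = n})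
    ⟨_, 1, isResolvingBroadcast_one G, fun _ => le_rfl, rfl⟩
  exact Nat.sInf_le ⟨f, hf, hsum⟩

lemma card_le_three_pow_bdim (G : SimpleGraph V) : Fintype.card V ≤ 3 ^ bdim G := by
  obtain ⟨f, hf, hsum⟩ := exists_isResolvingBroadcast_sum_eq_bdim G
  exact hsum ▸ hf.card_le_three_pow_sum

lemma log_card_le_bdim_mul_log_three (G : SimpleGraph V) :
    Real.log (Fintype.card V) ≤ bdim G * Real.log 3 := by
  rcases (Fintype.card V).eq_zero_or_pos with h | h
  · rw [h, Nat.cast_zero, Real.log_zero]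
    positivity
  · rw [← Real.log_pow]
    exact Real.log_le_log (by exact_mod_cast h) (by exact_mod_cast card_le_three_pow_bdim G)

/-- For every graph `G` of order `n`: `n ≥ adim(G) ≥ bdim(G)`, and
`bdim(G) = Ω(log n)`. -/
theorem stmt_19 :
    ∃ c : ℝ, 0 < c ∧ ∀ (n : ℕ) (G : SimpleGraph (Fin n)),
      adimB G ≤ n ∧ bdim G ≤ adimB G ∧ c * Real.log n ≤ (bdim G : ℝ) := by
  have hlog3 : 0 < Real.log 3 := Real.log_pos (by norm_num)
  refine ⟨(Real.log 3)⁻¹, inv_pos.mpr hlog3, fun n G => ⟨?_, bdim_le_adimB G, ?_⟩⟩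
  · simpa using adimB_le_card G
  · rw [inv_mul_le_iff₀ hlog3, mul_comm]
    simpa using log_card_le_bdim_mul_log_three G
end
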